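/- arXiv:1006.1389 — 2 statements merged into one kernel-verified Lean document; each statement's English description precedes it below -/
import Mathlib

section
/- Let d ≥ 1, p ∈ [1, ∞), λ ∈ ℝ^d, h > 0 and m ≥ 1 an integer. Let φ : ℝ^d → ℝ be (m+1)-times continuously differentiable with D_λ^i φ ∈ L^p(ℝ^d) for all 1 ≤ i ≤ m+1. Then ‖δ_{h,λ}φ − Σ_{i=1}^{m} (h^{i−1}/i!) D_λ^i φ‖_{L^p(ℝ^d)} ≤ (h^m/(m+1)!) ‖D_λ^{m+1}φ‖_{L^p(ℝ^d)}. -/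
open MeasureTheory ENNReal Finset

/-- The directional derivative `D_λφ(x) = Dφ(x)(λ)`; its iterates give `D_λ^i`. -/
noncomputable def dirDeriv {d : ℕ} (lam : EuclideanSpace ℝ (Fin d))
    (φ : EuclideanSpace ℝ (Fin d) → ℝ) : EuclideanSpace ℝ (Fin d) → ℝ :=
  fun x => fderiv ℝ φ x lam

/-!
Taylor's formula with integral remainder along the line `t ↦ x + t • λ` writes the left-hand
side at `x` as `∫₀ʰ k(t) D_λ^{m+1}φ(x + t • λ) dt`, with the nonnegative kernel
`k(t) = (h - t)^m / (m! h)` of total mass `h^m / (m+1)!`. Minkowski's integral inequality for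
this average of translates (Jensen's inequality for the measure `k(t) dt`, then Tonelli and the
translation invariance of Lebesgue measure) bounds its `L^p` norm by the mass of `k` times
`‖D_λ^{m+1}φ‖_p`.
-/

theorem rpow_lintegral_le_mul_lintegral_rpow {α : Type*} [MeasurableSpace α] (ν : Measure α)
    {g : α → ℝ≥0∞} (hg : AEMeasurable g ν) {q : ℝ} (hq : 1 ≤ q) :
    (∫⁻ a, g a ∂ν) ^ q ≤ ν Set.univ ^ (q - 1) * ∫⁻ a, g a ^ q ∂ν := by
  have hq0 : 0 < q := zero_lt_one.trans_le hq
  have h := eLpNorm'_le_eLpNorm'_mul_rpow_measure_univ zero_lt_one hq hg.aestronglyMeasurable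
  simp only [eLpNorm'_eq_lintegral_enorm, enorm_eq_self, rpow_one, div_one] at h
  calc (∫⁻ a, g a ∂ν) ^ q
      ≤ ((∫⁻ a, g a ^ q ∂ν) ^ (1 / q) * ν Set.univ ^ (1 - 1 / q)) ^ q := by gcongr
    _ = ν Set.univ ^ (q - 1) * ∫⁻ a, g a ^ q ∂ν := by
      rw [mul_rpow_of_nonneg _ _ hq0.le, ← rpow_mul, ← rpow_mul, one_div_mul_cancel hq0.ne',
        rpow_one, sub_mul, one_mul, one_div_mul_cancel hq0.ne', mul_comm]

theorem eLpNorm_lintegral_comp_add_le {G T : Type*} [AddGroup G] [MeasurableSpace G]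
    [MeasurableAdd₂ G] [MeasurableSpace T] {μ : Measure G} [μ.IsAddRightInvariant] [SFinite μ]
    {ν : Measure T} [SFinite ν] {τ : T → G} (hτ : Measurable τ) {g : G → ℝ≥0∞}
    (hg : Measurable g) {p : ℝ≥0∞} (hp1 : 1 ≤ p) (hp : p ≠ ⊤) :
    eLpNorm (fun x => ∫⁻ t, g (x + τ t) ∂ν) p μ ≤ ν Set.univ * eLpNorm g p μ := by
  set q := p.toReal
  have hq : 1 ≤ q := by simpa using ENNReal.toReal_mono hp hp1
  have hq0 : 0 < q := zero_lt_one.trans_le hq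
  have hG : Measurable (Function.uncurry fun x t => g (x + τ t)) :=
    hg.comp (measurable_fst.add (hτ.comp measurable_snd))
  have key : ∫⁻ x, (∫⁻ t, g (x + τ t) ∂ν) ^ q ∂μ ≤ ν Set.univ ^ q * ∫⁻ x, g x ^ q ∂μ := calc
    _ ≤ ∫⁻ x, ν Set.univ ^ (q - 1) * ∫⁻ t, g (x + τ t) ^ q ∂ν ∂μ :=
        lintegral_mono fun x => rpow_lintegral_le_mul_lintegral_rpow ν
          (hG.comp measurable_prodMk_left).aemeasurable hq
    _ = ν Set.univ ^ (q - 1) * ∫⁻ t, ∫⁻ x, g (x + τ t) ^ q ∂μ ∂ν := by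
        rw [lintegral_const_mul (f := fun x => ∫⁻ t, g (x + τ t) ^ q ∂ν) _
            (hG.pow_const q).lintegral_prod_right',
          lintegral_lintegral_swap (hG.pow_const q).aemeasurable]
    _ = ν Set.univ ^ q * ∫⁻ x, g x ^ q ∂μ := by
        simp only [lintegral_add_right_eq_self (fun y => g y ^ q), lintegral_const]
        have hsplit : ν Set.univ ^ q = ν Set.univ ^ (q - 1) * ν Set.univ := by
          simpa using rpow_add_of_nonneg (x := ν Set.univ) (q - 1) 1 (by linarith) zero_le_one
        rw [hsplit, mul_comm _ (ν _), mul_assoc]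
  rw [eLpNorm_eq_lintegral_rpow_enorm_toReal (zero_lt_one.trans_le hp1).ne' hp,
    eLpNorm_eq_lintegral_rpow_enorm_toReal (zero_lt_one.trans_le hp1).ne' hp]
  simp only [enorm_eq_self]
  calc _ ≤ (ν Set.univ ^ q * ∫⁻ x, g x ^ q ∂μ) ^ (1 / q) := by gcongr
    _ = _ := by
      rw [mul_rpow_of_nonneg _ _ (by positivity), ← rpow_mul, mul_one_div_cancel hq0.ne', rpow_one]

theorem enorm_intervalIntegral_smul_le_lintegral_withDensity {F : Type*} [NormedAddCommGroup F]
    [NormedSpace ℝ F] {k : ℝ → ℝ} {a b : ℝ} (hab : a ≤ b) (hkm : Measurable k)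
    (hk0 : ∀ t ∈ Set.Ioc a b, 0 ≤ k t) (f : ℝ → F) :
    ‖∫ t in a..b, k t • f t‖ₑ
      ≤ ∫⁻ t, ‖f t‖ₑ ∂(volume.restrict (Set.Ioc a b)).withDensity fun t => .ofReal (k t) := by
  rw [intervalIntegral.integral_of_le hab, lintegral_withDensity_eq_lintegral_mul_non_measurable _
    hkm.ennreal_ofReal (ae_of_all _ fun _ => ofReal_lt_top)]
  refine (enorm_integral_le_lintegral_enorm _).trans_eq
    (setLIntegral_congr_fun measurableSet_Ioc fun t ht => ?_)
  simp [enorm_smul, Real.enorm_of_nonneg (hk0 t ht)]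

theorem eLpNorm_intervalIntegral_smul_comp_add_smul_le {E F : Type*} [NormedAddCommGroup E]
    [NormedSpace ℝ E] [MeasurableSpace E] [BorelSpace E] [SecondCountableTopology E]
    {μ : Measure E} [μ.IsAddRightInvariant] [SFinite μ] [NormedAddCommGroup F] [NormedSpace ℝ F]
    {k : ℝ → ℝ} {a b : ℝ} (hab : a ≤ b) (hkm : Measurable k) (hki : IntervalIntegrable k volume a b)
    (hk0 : ∀ t ∈ Set.Ioc a b, 0 ≤ k t) {f : E → F} (hf : StronglyMeasurable f) (v : E)
    {p : ℝ≥0∞} (hp1 : 1 ≤ p) (hp : p ≠ ⊤) :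
    eLpNorm (fun x => ∫ t in a..b, k t • f (x + t • v)) p μ
      ≤ .ofReal (∫ t in a..b, k t) * eLpNorm f p μ := by
  set ν := (volume.restrict (Set.Ioc a b)).withDensity fun t => ENNReal.ofReal (k t)
  have hν : ν Set.univ = .ofReal (∫ t in a..b, k t) := by
    rw [withDensity_apply _ MeasurableSet.univ, Measure.restrict_univ,
      intervalIntegral.integral_of_le hab, ofReal_integral_eq_lintegral_ofReal
        ((intervalIntegrable_iff_integrableOn_Ioc_of_le hab).1 hki)
        ((ae_restrict_iff' measurableSet_Ioc).2 (ae_of_all _ hk0))]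
  calc eLpNorm (fun x => ∫ t in a..b, k t • f (x + t • v)) p μ
      ≤ eLpNorm (fun x => ∫⁻ t, ‖f (x + t • v)‖ₑ ∂ν) p μ := eLpNorm_mono_enorm fun x => by
        simpa only [enorm_eq_self] using
          enorm_intervalIntegral_smul_le_lintegral_withDensity hab hkm hk0 _
    _ ≤ ν Set.univ * eLpNorm (‖f ·‖ₑ) p μ :=
        eLpNorm_lintegral_comp_add_le (continuous_id.smul continuous_const).measurable
          hf.enorm hp1 hp
    _ = .ofReal (∫ t in a..b, k t) * eLpNorm f p μ := by rw [hν, eLpNorm_enorm]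

theorem taylor_integral_remainder_of_contDiff {F : Type*} [NormedAddCommGroup F]
    [NormedSpace ℝ F] [CompleteSpace F] {g : ℝ → F} {n : ℕ} (hg : ContDiff ℝ (n + 1) g)
    (a b : ℝ) :
    g b - ∑ k ∈ range (n + 1), ((b - a) ^ k / k.factorial) • iteratedDeriv k g a
      = ∫ t in a..b, ((b - t) ^ n / n.factorial) • iteratedDeriv (n + 1) g t := by
  rcases eq_or_ne a b with rfl | hab
  · simp [sum_range_succ']
  have hU := uniqueDiffOn_uIcc hab
  have hwithin (k : ℕ) (hk : k ≤ n + 1) {t : ℝ} (ht : t ∈ Set.uIcc a b) :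
      iteratedDerivWithin k g (Set.uIcc a b) t = iteratedDeriv k g t :=
    iteratedDerivWithin_eq_iteratedDeriv hU ((hg.of_le (by exact_mod_cast hk)).contDiffAt) ht
  have htaylor := taylor_integral_remainder (x₀ := a) (x := b) hg.contDiffOn
  rw [taylor_within_apply] at htaylor
  convert htaylor using 1
  · congr 1
    refine sum_congr rfl fun k hk => ?_
    rw [hwithin k (by simp at hk; omega) Set.left_mem_uIcc, div_eq_inv_mul]
  · exact intervalIntegral.integral_congr fun t ht => by simp only [hwithin (n + 1) le_rfl ht]

theorem integral_sub_pow_div_factorial_mul (m : ℕ) {h : ℝ} (hh : h ≠ 0) :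
    ∫ t in 0..h, (h - t) ^ m / (m.factorial * h) = h ^ m / (m + 1).factorial := by
  rw [intervalIntegral.integral_div, intervalIntegral.integral_comp_sub_left (fun u => u ^ m) h]
  simp only [sub_self, sub_zero, integral_pow]
  rw [Nat.factorial_succ, zero_pow m.succ_ne_zero]
  push_cast
  field_simp
  ring

section dirDeriv

variable {d : ℕ} (lam : EuclideanSpace ℝ (Fin d))

theorem contDiff_dirDeriv {n : ℕ} {φ : EuclideanSpace ℝ (Fin d) → ℝ}
    (hφ : ContDiff ℝ (n + 1) φ) : ContDiff ℝ n (dirDeriv lam φ) :=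
  (hφ.fderiv_right le_rfl).clm_apply contDiff_const

theorem contDiff_iterate_dirDeriv {i k : ℕ} {φ : EuclideanSpace ℝ (Fin d) → ℝ}
    (hφ : ContDiff ℝ (i + k) φ) : ContDiff ℝ k ((dirDeriv lam)^[i] φ) := by
  induction i generalizing φ with
  | zero => simpa using hφ
  | succ i ih =>
    rw [Function.iterate_succ_apply]
    exact ih (contDiff_dirDeriv lam (n := i + k) (by convert hφ using 1; push_cast; ring))

theorem iteratedDeriv_comp_add_smul {i : ℕ} {φ : EuclideanSpace ℝ (Fin d) → ℝ}
    (hφ : ContDiff ℝ i φ) (x : EuclideanSpace ℝ (Fin d)) (t : ℝ) :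
    iteratedDeriv i (fun s => φ (x + s • lam)) t = (dirDeriv lam)^[i] φ (x + t • lam) := by
  induction i generalizing φ t with
  | zero => simp
  | succ i ih =>
    have hderiv : deriv (fun s => φ (x + s • lam)) = fun s : ℝ => dirDeriv lam φ (x + s • lam) := by
      funext s
      have hline : HasDerivAt (fun s : ℝ => x + s • lam) lam s := by
        simpa using ((hasDerivAt_id s).smul_const lam).const_add x
      exact ((hφ.differentiable (by simp) _).hasFDerivAt.comp_hasDerivAt s hline).deriv
    rw [iteratedDeriv_succ', hderiv, Function.iterate_succ_apply]
    exact ih (contDiff_dirDeriv lam hφ) t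

theorem div_sub_sum_iterate_dirDeriv_eq_integral {m : ℕ} {φ : EuclideanSpace ℝ (Fin d) → ℝ}
    (hφ : ContDiff ℝ (m + 1) φ) (x : EuclideanSpace ℝ (Fin d)) {h : ℝ} (hh : h ≠ 0) :
    (φ (x + h • lam) - φ x) / h - ∑ i ∈ Icc 1 m, h ^ (i - 1) / i.factorial * (dirDeriv lam)^[i] φ x
      = ∫ t in 0..h, (h - t) ^ m / (m.factorial * h) * (dirDeriv lam)^[m + 1] φ (x + t • lam) := by
  have hline (k : ℕ) (hk : k ≤ m + 1) (t : ℝ) :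
      iteratedDeriv k (fun s => φ (x + s • lam)) t = (dirDeriv lam)^[k] φ (x + t • lam) :=
    iteratedDeriv_comp_add_smul lam (hφ.of_le (by exact_mod_cast hk)) x t
  have htaylor := taylor_integral_remainder_of_contDiff (g := fun s : ℝ => φ (x + s • lam))
    (hφ.comp (by fun_prop)) 0 h
  simp only [sub_zero, smul_eq_mul] at htaylor
  rw [sum_congr rfl fun k hk => by rw [hline k (by simp at hk; omega), zero_smul, add_zero],
    intervalIntegral.integral_congr fun t _ => by rw [hline (m + 1) le_rfl], range_eq_Ico,
    sum_eq_sum_Ico_succ_bot (by omega), Ico_add_one_right_eq_Icc] at htaylor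
  have hsum : ∑ i ∈ Icc 1 m, h ^ (i - 1) / i.factorial * (dirDeriv lam)^[i] φ x
      = h⁻¹ * ∑ i ∈ Icc 1 m, h ^ i / i.factorial * (dirDeriv lam)^[i] φ x := by
    rw [mul_sum]
    refine sum_congr rfl fun i hi => ?_
    rw [pow_sub₀ h hh (mem_Icc.1 hi).1]
    ring
  simp only [pow_zero, Nat.factorial_zero, Nat.cast_one, div_one, one_mul,
    Function.iterate_zero_apply, zero_add] at htaylor
  calc _ = h⁻¹ * (φ (x + h • lam)
          - (φ x + ∑ i ∈ Icc 1 m, h ^ i / i.factorial * (dirDeriv lam)^[i] φ x)) := by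
        rw [hsum]; ring
    _ = _ := by
        rw [htaylor, ← intervalIntegral.integral_const_mul]
        exact intervalIntegral.integral_congr fun t _ => by ring

end dirDeriv

theorem finite_difference_Lp_taylor_general
    (d : ℕ) (p : ℝ≥0∞) (hp1 : 1 ≤ p) (hp2 : p ≠ ⊤)
    (lam : EuclideanSpace ℝ (Fin d)) (h : ℝ) (hh : 0 < h)
    (m : ℕ) (φ : EuclideanSpace ℝ (Fin d) → ℝ)
    (hφ : ContDiff ℝ (m + 1) φ) :
    eLpNorm
        (fun x => (φ (x + h • lam) - φ x) / h
          - ∑ i ∈ Finset.Icc 1 m, (h ^ (i - 1) / (Nat.factorial i)) * (dirDeriv lam)^[i] φ x)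
        p (volume : Measure (EuclideanSpace ℝ (Fin d)))
      ≤ ENNReal.ofReal (h ^ m / (Nat.factorial (m + 1)))
          * eLpNorm ((dirDeriv lam)^[m + 1] φ) p (volume : Measure (EuclideanSpace ℝ (Fin d))) := by
  have hf : Continuous ((dirDeriv lam)^[m + 1] φ) :=
    (contDiff_iterate_dirDeriv lam (k := 0) (by simpa using hφ)).continuous
  have hk : Continuous fun t : ℝ => (h - t) ^ m / (m.factorial * h) := by fun_prop
  have hk0 (t : ℝ) (ht : t ∈ Set.Ioc 0 h) : 0 ≤ (h - t) ^ m / (m.factorial * h) :=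
    div_nonneg (pow_nonneg (sub_nonneg.2 ht.2) m) (by positivity)
  simp_rw [div_sub_sum_iterate_dirDeriv_eq_integral lam hφ _ hh.ne']
  rw [← integral_sub_pow_div_factorial_mul m hh.ne']
  exact eLpNorm_intervalIntegral_smul_comp_add_smul_le hh.le hk.measurable
    (hk.intervalIntegrable _ _) hk0 hf.stronglyMeasurable lam hp1 hp2

/-- `L^p` Taylor estimate of order `m` for the finite difference
`δ_{h,λ}φ = (φ(· + hλ) − φ)/h`. -/
theorem finite_difference_Lp_taylor
    (d : ℕ) (hd : 1 ≤ d) (p : ℝ≥0∞) (hp1 : 1 ≤ p) (hp2 : p ≠ ⊤)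
    (lam : EuclideanSpace ℝ (Fin d)) (h : ℝ) (hh : 0 < h)
    (m : ℕ) (hm : 1 ≤ m) (φ : EuclideanSpace ℝ (Fin d) → ℝ)
    (hφ : ContDiff ℝ (m + 1) φ)
    (hint : ∀ i, 1 ≤ i → i ≤ m + 1 →
      MemLp ((dirDeriv lam)^[i] φ) p (volume : Measure (EuclideanSpace ℝ (Fin d)))) :
    eLpNorm
        (fun x => (φ (x + h • lam) - φ x) / h
          - ∑ i ∈ Finset.Icc 1 m, (h ^ (i - 1) / (Nat.factorial i)) * (dirDeriv lam)^[i] φ x)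
        p (volume : Measure (EuclideanSpace ℝ (Fin d)))
      ≤ ENNReal.ofReal (h ^ m / (Nat.factorial (m + 1)))
          * eLpNorm ((dirDeriv lam)^[m + 1] φ) p (volume : Measure (EuclideanSpace ℝ (Fin d))) :=
  finite_difference_Lp_taylor_general d p hp1 hp2 lam h hh m φ hφ
end

section
/- (Abstract Richardson acceleration.) Let (E, ‖·‖) be a real normed space, k ≥ 0 an integer, h₀ > 0, N ≥ 0, and let u, u_1, …, u_k ∈ E. Suppose (v_h)_{h ∈ (0, h₀]} is a family of elements of E such that ‖v_h − u − Σ_{j=1}^{k} h^j u_j‖ ≤ N h^{k+1} for all h ∈ (0, h₀]. Let b_0, …, b_k be the unique real numbers satisfying Σ_{j=0}^{k} b_j 2^{−ji} = δ_{i,0} for i = 0, …, k. Then for every h ∈ (0, h₀], ‖Σ_{j=0}^{k} b_j v_{2^{−j}h} − u‖ ≤ N h^{k+1} Σ_{j=0}^{k} |b_j| 2^{−j(k+1)}; in particular the extrapolated approximation Σ_{j=0}^{k} b_j v_{2^{−j}h} converges to u with rate h^{k+1}. -/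
/-!
If the weights `b j` and nodes `t j` satisfy the moment conditions `∑ j, b j * t j ^ i = δ_{i,0}`
for `i ≤ k`, then applying `∑ j, b j • _` to the expansions `u + ∑_{1 ≤ i ≤ k} (t j * h) ^ i • u' i`
returns `u` exactly, so the extrapolation error is the `b`-weighted sum of the remainders, each
bounded by `N * (t j * h) ^ (k + 1)`. Richardson extrapolation is the case `t j = 2 ^ (-j)`.
-/

open Finset

lemma zpow_neg_natCast_mul {α : Type*} [DivisionMonoid α] (a : α) (m n : ℕ) :
    a ^ (-(m * n : ℤ)) = (a ^ (-(m : ℤ))) ^ n := by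
  rw [← neg_mul, zpow_mul, zpow_natCast]

section Richardson

variable {E : Type*} [NormedAddCommGroup E] [NormedSpace ℝ E] {ι : Type*} [Fintype ι]

lemma sum_smul_sum_pow_smul_eq_zero (b t : ι → ℝ) (s : Finset ℕ)
    (hbt : ∀ i ∈ s, ∑ j, b j * t j ^ i = 0) (h : ℝ) (w : ℕ → E) :
    ∑ j, b j • ∑ i ∈ s, (t j * h) ^ i • w i = 0 := by
  calc ∑ j, b j • ∑ i ∈ s, (t j * h) ^ i • w i
      = ∑ i ∈ s, (∑ j, b j * t j ^ i) • h ^ i • w i := by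
        simp only [smul_sum, smul_smul, mul_pow, sum_mul, sum_smul, mul_assoc]
        exact Finset.sum_comm
    _ = 0 := sum_eq_zero fun i hi => by rw [hbt i hi, zero_smul]

theorem norm_sum_smul_sub_le_of_moments (k : ℕ) (N : ℝ) (u : E) (u' : ℕ → E) (v : ℝ → E)
    (b t : ι → ℝ) (hbt : ∀ i ≤ k, ∑ j, b j * t j ^ i = if i = 0 then 1 else 0) (h : ℝ)
    (hv : ∀ j, ‖v (t j * h) - u - ∑ i ∈ Icc 1 k, (t j * h) ^ i • u' i‖ ≤ N * (t j * h) ^ (k + 1)) :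
    ‖∑ j, b j • v (t j * h) - u‖ ≤ N * h ^ (k + 1) * ∑ j, |b j| * t j ^ (k + 1) := by
  have hsum : ∑ j, b j = 1 := by simpa using hbt 0 k.zero_le
  have hvanish : ∑ j, b j • ∑ i ∈ Icc 1 k, (t j * h) ^ i • u' i = 0 := by
    refine sum_smul_sum_pow_smul_eq_zero b t _ (fun i hi => ?_) h u'
    obtain ⟨hi1, hik⟩ := mem_Icc.mp hi
    simpa [Nat.one_le_iff_ne_zero.mp hi1] using hbt i hik
  have herr : ∑ j, b j • v (t j * h) - u =
      ∑ j, b j • (v (t j * h) - u - ∑ i ∈ Icc 1 k, (t j * h) ^ i • u' i) := by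
    simp only [smul_sub, sum_sub_distrib, hvanish, ← sum_smul, hsum, one_smul, sub_zero]
  calc ‖∑ j, b j • v (t j * h) - u‖
      ≤ ∑ j, |b j| * (N * (t j * h) ^ (k + 1)) := by
        rw [herr]
        refine (norm_sum_le _ _).trans (sum_le_sum fun j _ => ?_)
        rw [norm_smul, Real.norm_eq_abs]
        exact mul_le_mul_of_nonneg_left (hv j) (abs_nonneg _)
    _ = N * h ^ (k + 1) * ∑ j, |b j| * t j ^ (k + 1) := by
        rw [mul_sum]
        exact sum_congr rfl fun j _ => by ring

end Richardson

theorem richardson_acceleration_general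
    (E : Type*) [NormedAddCommGroup E] [NormedSpace ℝ E]
    (k : ℕ) (h₀ : ℝ) (N : ℝ)
    (u : E) (u' : ℕ → E) (v : ℝ → E)
    (hv : ∀ h ∈ Set.Ioc (0 : ℝ) h₀,
      ‖v h - u - ∑ j ∈ Finset.Icc 1 k, h ^ j • u' j‖ ≤ N * h ^ (k + 1))
    (b : Fin (k + 1) → ℝ)
    (hb : ∀ i : Fin (k + 1),
      ∑ j : Fin (k + 1), b j * (2 : ℝ) ^ (-(j * i : ℤ)) = if i = 0 then 1 else 0) :
    ∀ h ∈ Set.Ioc (0 : ℝ) h₀,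
      ‖(∑ j : Fin (k + 1), b j • v ((2 : ℝ) ^ (-(j : ℤ)) * h)) - u‖
        ≤ N * h ^ (k + 1) * ∑ j : Fin (k + 1), |b j| * (2 : ℝ) ^ (-(j * (k + 1) : ℤ)) := by
  rintro h ⟨hpos, hle⟩
  have hnode (j : Fin (k + 1)) : (2 : ℝ) ^ (-(j : ℤ)) * h ∈ Set.Ioc 0 h₀ :=
    ⟨by positivity,
      (mul_le_of_le_one_left hpos.le (zpow_le_one_of_nonpos₀ one_le_two (by simp))).trans hle⟩
  have hmoments (i : ℕ) (hi : i ≤ k) :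
      ∑ j : Fin (k + 1), b j * ((2 : ℝ) ^ (-(j : ℤ))) ^ i = if i = 0 then 1 else 0 := by
    simpa only [Fin.ext_iff, Fin.val_mk, Fin.val_zero, zpow_neg_natCast_mul] using
      hb ⟨i, by omega⟩
  have hbound := norm_sum_smul_sub_le_of_moments k N u u' v b _ hmoments h
    fun j => hv _ (hnode j)
  convert hbound using 3 with j
  rw [← zpow_neg_natCast_mul]
  push_cast
  rfl

/-- Abstract Richardson acceleration: if the approximations `v_h` admit a power
series expansion in `h` around the target `u` up to order `k` with remainder
`N h^{k+1}`, then the extrapolation `∑_j b_j v_{2^{−j} h}` with the Richardson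
coefficients `b_j` approximates `u` with rate `h^{k+1}`. -/
theorem richardson_acceleration
    (E : Type*) [NormedAddCommGroup E] [NormedSpace ℝ E]
    (k : ℕ) (h₀ : ℝ) (hh₀ : 0 < h₀) (N : ℝ) (hN : 0 ≤ N)
    (u : E) (u' : ℕ → E) (v : ℝ → E)
    (hv : ∀ h ∈ Set.Ioc (0 : ℝ) h₀,
      ‖v h - u - ∑ j ∈ Finset.Icc 1 k, h ^ j • u' j‖ ≤ N * h ^ (k + 1))
    (b : Fin (k + 1) → ℝ)
    (hb : ∀ i : Fin (k + 1),
      ∑ j : Fin (k + 1), b j * (2 : ℝ) ^ (-(j * i : ℤ)) = if i = 0 then 1 else 0) :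
    ∀ h ∈ Set.Ioc (0 : ℝ) h₀,
      ‖(∑ j : Fin (k + 1), b j • v ((2 : ℝ) ^ (-(j : ℤ)) * h)) - u‖
        ≤ N * h ^ (k + 1) * ∑ j : Fin (k + 1), |b j| * (2 : ℝ) ^ (-(j * (k + 1) : ℤ)) :=
  richardson_acceleration_general E k h₀ N u u' v hv b hb
end
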